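/- For every n ∈ ℕ, every coefficient vector ψ : {0,…,n} → ℂ, and all u, v, z₁, z₂ ∈ ℂ, the following polynomial identity holds: Σ_{k=0}^{n} √C(n,k) · conj(ψ_k) · (conj(u)·z₁ + conj(v)·z₂)^{n−k} · (−v·z₁ + u·z₂)^{k} = Σ_{k'=0}^{n} √C(n,k') · conj(φ_{k'}) · z₁^{n−k'} · z₂^{k'}, where φ = Mⁿ(u,v)·ψ is the matrix–vector product. In other words, applying the substitution (z₁,z₂) ↦ (conj(u)z₁ + conj(v)z₂, −v z₁ + u z₂) to the homogeneous polynomial f_ψ(z₁,z₂) = Σ_k √C(n,k) conj(ψ_k) z₁^{n−k} z₂^{k} associated with ψ yields the homogeneous polynomial associated with the transformed vector Mⁿ(u,v)ψ. -/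
import Mathlib


open Matrix Finset

lemma key (A B C D z₁ z₂ : ℂ) {k n : ℕ} (hk : k ≤ n) :
    (A * z₁ + B * z₂) ^ (n - k) * (C * z₁ + D * z₂) ^ k =
    ∑ k' ∈ Finset.range (n + 1), ∑ a ∈ Finset.Icc (k - k') (min k (n - k')),
      (k.choose a : ℂ) * ((n - k).choose (k' + a - k) : ℂ) * A ^ (n - k' - a) *
        B ^ (k' + a - k) * C ^ a * D ^ (k - a) * z₁ ^ (n - k') * z₂ ^ k' := by
  rw [add_pow, add_pow, Finset.sum_mul_sum, ← Finset.sum_product',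
    Finset.sum_sigma']
  refine Finset.sum_nbij' (fun p => ⟨n - p.1 - p.2, p.2⟩)
    (fun q => (n - q.1 - q.2, q.2)) ?_ ?_ ?_ ?_ ?_
  · rintro ⟨b, a⟩ h
    simp only [Finset.mem_product, Finset.mem_range, Finset.mem_sigma,
      Finset.mem_Icc] at *
    omega
  · rintro ⟨k', a⟩ h
    simp only [Finset.mem_product, Finset.mem_range, Finset.mem_sigma,
      Finset.mem_Icc] at *
    omega
  · rintro ⟨b, a⟩ h
    simp only [Finset.mem_product, Finset.mem_range] at h
    dsimp only
    exact Prod.ext (by omega) rfl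
  · rintro ⟨k', a⟩ h
    simp only [Finset.mem_sigma, Finset.mem_range, Finset.mem_Icc] at h
    have h1 : a ≤ k := le_trans h.2.2 (min_le_left _ _)
    have h2 : a ≤ n - k' := le_trans h.2.2 (min_le_right _ _)
    dsimp only
    simp only [Sigma.mk.inj_iff]
    exact ⟨by omega, HEq.rfl⟩
  · rintro ⟨b, a⟩ h
    simp only [Finset.mem_product, Finset.mem_range] at h
    obtain ⟨hb, ha⟩ := h
    have hb' : b ≤ n - k := by omega
    have ha' : a ≤ k := by omega
    have e1 : n - (n - b - a) - a = b := by omega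
    have e2 : (n - b - a) + a - k = n - k - b := by omega
    have e3 : n - (n - b - a) = b + a := by omega
    have e4 : (n - k).choose (n - k - b) = (n - k).choose b := Nat.choose_symm hb'
    have e5 : n - k - b + (k - a) = n - b - a := by omega
    dsimp only
    rw [e1, e2, e3, e4]
    rw [mul_pow, mul_pow, mul_pow, mul_pow]
    rw [show (n:ℕ) - b - a = n - k - b + (k - a) from e5.symm, pow_add]
    ring

/-- The polynomial parametrization `U^{(j)}` (with `j = n/2`, index `k = j - m`) of the
spin-`j` rotation matrix, as an `(n+1)×(n+1)` complex matrix depending on `u, v ∈ ℂ`. -/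
noncomputable def Mrep (n : ℕ) (u v : ℂ) : Matrix (Fin (n + 1)) (Fin (n + 1)) ℂ :=
  Matrix.of fun k' k =>
    (Real.sqrt ((n.choose (k : ℕ) : ℝ) / (n.choose (k' : ℕ) : ℝ)) : ℂ) *
      ∑ a ∈ Finset.Icc (max 0 ((k : ℕ) - (k' : ℕ))) (min (k : ℕ) (n - (k' : ℕ))),
        ((k : ℕ).choose a : ℂ) * ((n - (k : ℕ)).choose ((k' : ℕ) + a - (k : ℕ)) : ℂ) *
          (-1 : ℂ) ^ a * u ^ (n - (k' : ℕ) - a) * (starRingEnd ℂ u) ^ ((k : ℕ) - a) *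
          v ^ ((k' : ℕ) + a - (k : ℕ)) * (starRingEnd ℂ v) ^ a

/-- Applying the substitution
`(z₁,z₂) ↦ (conj(u)z₁ + conj(v)z₂, −v z₁ + u z₂)` to the homogeneous polynomial
`f_ψ(z₁,z₂) = Σ_k √C(n,k) conj(ψ_k) z₁^{n−k} z₂^{k}` associated with `ψ` yields the
homogeneous polynomial associated with the transformed vector `Mⁿ(u,v)·ψ`. -/
theorem Mrep_poly_action (n : ℕ) (ψ : Fin (n + 1) → ℂ) (u v z₁ z₂ : ℂ) :
    ∑ k : Fin (n + 1),
        (Real.sqrt (n.choose (k : ℕ) : ℝ) : ℂ) * starRingEnd ℂ (ψ k) *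
          (starRingEnd ℂ u * z₁ + starRingEnd ℂ v * z₂) ^ (n - (k : ℕ)) *
          (-v * z₁ + u * z₂) ^ (k : ℕ) =
      ∑ k' : Fin (n + 1),
        (Real.sqrt (n.choose (k' : ℕ) : ℝ) : ℂ) *
          starRingEnd ℂ ((Mrep n u v).mulVec ψ k') *
          z₁ ^ (n - (k' : ℕ)) * z₂ ^ (k' : ℕ) := by
  have hC : ∀ k' : Fin (n + 1), ((n.choose (k' : ℕ) : ℝ)) ≠ 0 := fun k' =>
    Nat.cast_ne_zero.mpr (Nat.choose_pos (Nat.lt_succ_iff.mp k'.2)).ne'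
  have hsqrt : ∀ k k' : Fin (n + 1),
      Real.sqrt (n.choose (k' : ℕ)) *
        Real.sqrt ((n.choose (k : ℕ) : ℝ) / (n.choose (k' : ℕ) : ℝ)) =
      Real.sqrt (n.choose (k : ℕ)) := by
    intro k k'
    rw [← Real.sqrt_mul (by positivity), mul_div_cancel₀ _ (hC k')]
  calc
    ∑ k : Fin (n + 1),
        (Real.sqrt (n.choose (k : ℕ) : ℝ) : ℂ) * starRingEnd ℂ (ψ k) *
          (starRingEnd ℂ u * z₁ + starRingEnd ℂ v * z₂) ^ (n - (k : ℕ)) *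
          (-v * z₁ + u * z₂) ^ (k : ℕ)
      = ∑ k : Fin (n + 1), ∑ k' ∈ Finset.range (n + 1),
          (Real.sqrt (n.choose (k : ℕ) : ℝ) : ℂ) * starRingEnd ℂ (ψ k) *
            ∑ a ∈ Finset.Icc ((k : ℕ) - k') (min (k : ℕ) (n - k')),
              ((k : ℕ).choose a : ℂ) * ((n - (k : ℕ)).choose (k' + a - (k : ℕ)) : ℂ) *
                (starRingEnd ℂ u) ^ (n - k' - a) * (starRingEnd ℂ v) ^ (k' + a - (k : ℕ)) *
                (-v) ^ a * u ^ ((k : ℕ) - a) * z₁ ^ (n - k') * z₂ ^ k' := by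
        refine Finset.sum_congr rfl fun k _ => ?_
        rw [mul_assoc, key (starRingEnd ℂ u) (starRingEnd ℂ v) (-v) u z₁ z₂
          (Nat.lt_succ_iff.mp k.2), Finset.mul_sum]
    _ = ∑ k' ∈ Finset.range (n + 1), ∑ k : Fin (n + 1),
          (Real.sqrt (n.choose (k : ℕ) : ℝ) : ℂ) * starRingEnd ℂ (ψ k) *
            ∑ a ∈ Finset.Icc ((k : ℕ) - k') (min (k : ℕ) (n - k')),
              ((k : ℕ).choose a : ℂ) * ((n - (k : ℕ)).choose (k' + a - (k : ℕ)) : ℂ) *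
                (starRingEnd ℂ u) ^ (n - k' - a) * (starRingEnd ℂ v) ^ (k' + a - (k : ℕ)) *
                (-v) ^ a * u ^ ((k : ℕ) - a) * z₁ ^ (n - k') * z₂ ^ k' :=
        Finset.sum_comm
    _ = ∑ k' : Fin (n + 1),
        (Real.sqrt (n.choose (k' : ℕ) : ℝ) : ℂ) *
          starRingEnd ℂ ((Mrep n u v).mulVec ψ k') *
          z₁ ^ (n - (k' : ℕ)) * z₂ ^ (k' : ℕ) := by
        rw [Finset.sum_range]
        refine Finset.sum_congr rfl fun k' _ => ?_
        simp only [Matrix.mulVec, dotProduct, Mrep, Matrix.of_apply, Nat.zero_max]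
        rw [map_sum, Finset.mul_sum, Finset.sum_mul, Finset.sum_mul]
        refine Finset.sum_congr rfl fun k _ => ?_
        simp only [_root_.map_mul, map_sum, map_pow, map_natCast, map_neg,
          _root_.map_one, Complex.conj_ofReal, Complex.conj_conj]
        simp only [Finset.mul_sum, Finset.sum_mul]
        refine Finset.sum_congr rfl fun a ha => ?_
        have h2 : ((Real.sqrt (n.choose (k':ℕ)) : ℂ)) *
            ((Real.sqrt ((n.choose (k:ℕ):ℝ) / (n.choose (k':ℕ):ℝ)) : ℂ)) =
            ((Real.sqrt (n.choose (k:ℕ)) : ℂ)) := by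
          exact_mod_cast congrArg Complex.ofReal (hsqrt k k')
        rw [neg_pow v a, ← h2]
        ring
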